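/- The Price of Anarchy of M_AV is at least 2. Concretely: let a, a', s > 0 and T = (a'+s)/(a'+s+a). For every ε ∈ (0,1), consider the instance with 2 experts and 2 proposals, all g_{ij} = 0, where expert 1 has w_1 = 1+ε, p_{11} = T, p_{12} = 1, and expert 2 has w_2 = 1−ε, p_{21} = 1, p_{22} = 0. Then the voting profile in which expert 1 approves only proposal 2 and expert 2 approves only proposal 1 is an exact semi-strategic PNE of M_AV (a PNE that is semi-strategically consistent); its winner is proposal 2, and Qual[2] = 1+ε while Qual[1] = 2. -/

import Mathlib

/-!
At the threshold `T` an expert with belief exactly `T` is indifferent between approving and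
rejecting, and both give `a' (1 - T) < a`. Expert 1 gets `a` at the equilibrium, the most she can
get anywhere, so she has no profitable deviation, and her only dishonest vote (rejecting
proposal 1, in which her belief is exactly `T`) is strictly worse to fix: approving it makes
proposal 1 win with weight `2 > 1 + ε`. Expert 2 is too light to overturn the winner, so she can
only lose by approving proposal 2, in which she has no confidence.
-/

open Finset

/-- Total approving weight of proposal `j` under voting profile `r`. -/
def approvalWeight {n k : ℕ} (w : Fin n → ℝ) (r : Fin n → Fin k → Bool) (j : Fin k) : ℝ :=
  ∑ i, if r i j then w i else 0

/-- The winner of the approval-voting mechanism `M_AV`: the proposal of smallest index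
maximizing the total approving weight; no proposal is selected when every proposal has zero
total approving weight. -/
noncomputable def winner {n k : ℕ} (w : Fin n → ℝ) (r : Fin n → Fin k → Bool) :
    Option (Fin k) :=
  if h : ∀ j, approvalWeight w r j = 0 then none
  else
    some ((Finset.univ.filter fun j => ∀ j', approvalWeight w r j' ≤ approvalWeight w r j).min'
      (by
        obtain ⟨j0, -⟩ := not_forall.mp h
        obtain ⟨j, -, hj⟩ :=
          Finset.exists_max_image Finset.univ (approvalWeight w r) ⟨j0, Finset.mem_univ j0⟩
        exact ⟨j, Finset.mem_filter.mpr
          ⟨Finset.mem_univ j, fun j' => hj j' (Finset.mem_univ j')⟩⟩))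

/-- Expected utility of expert `i` under profile `r`, beliefs `p`, external rewards `g`,
and reward parameters `a`, `a'`, `s`. -/
noncomputable def utility {n k : ℕ} (w : Fin n → ℝ) (p g : Fin n → Fin k → ℝ)
    (a a' s : ℝ) (r : Fin n → Fin k → Bool) (i : Fin n) : ℝ :=
  match winner w r with
  | none => 0
  | some j => g i j * p i j + (if r i j then a * p i j - s * (1 - p i j) else a' * (1 - p i j))

/-- Estimated quality of proposal `j` with respect to threshold `T`. -/
noncomputable def qual {n k : ℕ} (w : Fin n → ℝ) (p : Fin n → Fin k → ℝ) (T : ℝ)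
    (j : Fin k) : ℝ :=
  ∑ i, if T ≤ p i j then w i else 0

/-- The profile obtained from `r` by flipping the single vote of expert `i` on proposal `j`. -/
def flipVote {n k : ℕ} (r : Fin n → Fin k → Bool) (i : Fin n) (j : Fin k) :
    Fin n → Fin k → Bool :=
  Function.update r i (Function.update (r i) j (!(r i j)))

/-- A profile is semi-strategically consistent if flipping any dishonest vote to its honest
value strictly decreases the deviating expert's utility. -/
def semiStrategicConsistent {n k : ℕ} (w : Fin n → ℝ) (p g : Fin n → Fin k → ℝ)
    (a a' s T : ℝ) (r : Fin n → Fin k → Bool) : Prop :=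
  ∀ i j, ((r i j = true ∧ p i j < T) ∨ (r i j = false ∧ T ≤ p i j)) →
    utility w p g a a' s (flipVote r i j) i < utility w p g a a' s r i

theorem winner_eq_some_of_forall_lt {n k : ℕ} {w : Fin n → ℝ} {r : Fin n → Fin k → Bool}
    {j : Fin k} (hpos : 0 < approvalWeight w r j)
    (hlt : ∀ j' ≠ j, approvalWeight w r j' < approvalWeight w r j) :
    winner w r = some j := by
  rw [winner, dif_neg fun h => hpos.ne' (h j)]
  congr 1
  generalize_proofs hnonempty
  by_contra hne
  have hmax := (mem_filter.mp (min'_mem _ hnonempty)).2 j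
  exact (hlt _ hne).not_ge hmax

theorem utility_of_winner_eq_some {n k : ℕ} {w : Fin n → ℝ} {r : Fin n → Fin k → Bool}
    {j : Fin k} (p g : Fin n → Fin k → ℝ) (a a' s : ℝ) (i : Fin n)
    (h : winner w r = some j) :
    utility w p g a a' s r i =
      g i j * p i j + if r i j then a * p i j - s * (1 - p i j) else a' * (1 - p i j) := by
  rw [utility, h]

theorem utility_le_of_forall_vote {n k : ℕ} {w : Fin n → ℝ} {p g : Fin n → Fin k → ℝ}
    {a a' s c : ℝ} (r : Fin n → Fin k → Bool) (i : Fin n) (hc : 0 ≤ c)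
    (h : ∀ j (b : Bool),
      g i j * p i j + (if b then a * p i j - s * (1 - p i j) else a' * (1 - p i j)) ≤ c) :
    utility w p g a a' s r i ≤ c := by
  unfold utility
  split
  · exact hc
  · exact h _ _

section Threshold

variable {a a' s T : ℝ}

theorem approve_payoff_eq_reject_payoff_of_threshold (hT : T = (a' + s) / (a' + s + a))
    (hD : a' + s + a ≠ 0) : a * T - s * (1 - T) = a' * (1 - T) := by
  subst hT
  field_simp
  ring

theorem reject_payoff_lt_of_threshold (hT : T = (a' + s) / (a' + s + a)) (ha : 0 < a)
    (ha' : 0 < a') (hs : 0 < s) : a' * (1 - T) < a := by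
  have hD : 0 < a' + s + a := by positivity
  have h1T : 1 - T = a / (a' + s + a) := by
    rw [hT]
    field_simp
    ring
  rw [h1T, mul_div_assoc', div_lt_iff₀ hD]
  nlinarith

theorem threshold_mem_Ioo (hT : T = (a' + s) / (a' + s + a)) (ha : 0 < a) (ha' : 0 < a')
    (hs : 0 < s) : T ∈ Set.Ioo (0 : ℝ) 1 := by
  have hD : 0 < a' + s + a := by positivity
  subst hT
  exact ⟨by positivity, (div_lt_one hD).mpr (by linarith)⟩

end Threshold

/-- Expert weights of the instance; index `0` is the paper's expert 1. -/
def poaWeights (ε : ℝ) : Fin 2 → ℝ := ![1 + ε, 1 - ε]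

def poaBeliefs (T : ℝ) : Fin 2 → Fin 2 → ℝ := ![![T, 1], ![1, 0]]

def poaProfile : Fin 2 → Fin 2 → Bool := ![![false, true], ![true, false]]

section Instance

variable {ε : ℝ}

theorem winner_update_poaProfile_one (hε : 0 < ε) (r' : Fin 2 → Bool) :
    winner (poaWeights ε) (Function.update poaProfile 1 r') = some 1 := by
  have hw0 : approvalWeight (poaWeights ε) (Function.update poaProfile 1 r') 0 =
      if r' 0 then 1 - ε else 0 := by
    simp [approvalWeight, poaWeights, poaProfile, Fin.sum_univ_two, Function.update]
  have hw1 : approvalWeight (poaWeights ε) (Function.update poaProfile 1 r') 1 =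
      1 + ε + if r' 1 then 1 - ε else 0 := by
    simp [approvalWeight, poaWeights, poaProfile, Fin.sum_univ_two, Function.update]
  refine winner_eq_some_of_forall_lt ?_ ?_
  · rw [hw1]
    split <;> linarith
  · intro j' hj'
    obtain rfl : j' = 0 := by omega
    rw [hw0, hw1]
    split <;> split <;> linarith

theorem winner_poaProfile (hε : 0 < ε) :
    winner (poaWeights ε) poaProfile = some 1 := by
  simpa using winner_update_poaProfile_one hε (poaProfile 1)

theorem winner_flipVote_poaProfile_zero_zero (hε : ε < 1) :
    winner (poaWeights ε) (flipVote poaProfile 0 0) = some 0 := by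
  have hw0 : approvalWeight (poaWeights ε) (flipVote poaProfile 0 0) 0 = 2 := by
    simp [approvalWeight, poaWeights, poaProfile, flipVote, Fin.sum_univ_two, Function.update]
    ring
  have hw1 : approvalWeight (poaWeights ε) (flipVote poaProfile 0 0) 1 = 1 + ε := by
    simp [approvalWeight, poaWeights, poaProfile, flipVote, Fin.sum_univ_two, Function.update]
  refine winner_eq_some_of_forall_lt (by rw [hw0]; norm_num) ?_
  intro j' hj'
  obtain rfl : j' = 1 := by omega
  rw [hw0, hw1]
  linarith

variable {a a' s T : ℝ}

theorem utility_poaProfile_zero (hε : 0 < ε) :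
    utility (poaWeights ε) (poaBeliefs T) (fun _ _ => 0) a a' s poaProfile 0 = a := by
  rw [utility_of_winner_eq_some _ _ _ _ _ _ (winner_poaProfile hε)]
  simp [poaBeliefs, poaProfile]

theorem utility_poaProfile_one (hε : 0 < ε) :
    utility (poaWeights ε) (poaBeliefs T) (fun _ _ => 0) a a' s poaProfile 1 = a' := by
  rw [utility_of_winner_eq_some _ _ _ _ _ _ (winner_poaProfile hε)]
  simp [poaBeliefs, poaProfile]

theorem utility_poaBeliefs_zero_le (hT : T = (a' + s) / (a' + s + a)) (ha : 0 < a) (ha' : 0 < a')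
    (hs : 0 < s) (r : Fin 2 → Fin 2 → Bool) :
    utility (poaWeights ε) (poaBeliefs T) (fun _ _ => 0) a a' s r 0 ≤ a := by
  have hindiff := approve_payoff_eq_reject_payoff_of_threshold hT (by positivity)
  have hreject := reject_payoff_lt_of_threshold hT ha ha' hs
  refine utility_le_of_forall_vote r 0 ha.le fun j b => ?_
  fin_cases j <;> cases b <;> simp [poaBeliefs] <;> linarith

theorem utility_update_poaProfile_one_le (hε : 0 < ε) (ha' : 0 < a')
    (hs : 0 < s) (r' : Fin 2 → Bool) :
    utility (poaWeights ε) (poaBeliefs T) (fun _ _ => 0) a a' s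
      (Function.update poaProfile 1 r') 1 ≤ a' := by
  rw [utility_of_winner_eq_some _ _ _ _ _ _ (winner_update_poaProfile_one hε r'),
    Function.update_self]
  cases r' 1 <;> simp [poaBeliefs]
  linarith

theorem utility_flipVote_poaProfile_zero_zero (hε : ε < 1)
    (hT : T = (a' + s) / (a' + s + a)) (ha : 0 < a) (ha' : 0 < a') (hs : 0 < s) :
    utility (poaWeights ε) (poaBeliefs T) (fun _ _ => 0) a a' s (flipVote poaProfile 0 0) 0
      < a := by
  rw [utility_of_winner_eq_some _ _ _ _ _ _ (winner_flipVote_poaProfile_zero_zero hε)]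
  have hindiff := approve_payoff_eq_reject_payoff_of_threshold hT (by positivity)
  have hreject := reject_payoff_lt_of_threshold hT ha ha' hs
  simp [flipVote, poaProfile, poaBeliefs]
  linarith

theorem semiStrategicConsistent_poaProfile (hε : ε ∈ Set.Ioo (0 : ℝ) 1)
    (hT : T = (a' + s) / (a' + s + a)) (ha : 0 < a) (ha' : 0 < a') (hs : 0 < s) :
    semiStrategicConsistent (poaWeights ε) (poaBeliefs T) (fun _ _ => 0) a a' s T
      poaProfile := by
  obtain ⟨hT0, hT1⟩ := threshold_mem_Ioo hT ha ha' hs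
  intro i j hdishonest
  fin_cases i <;> fin_cases j
  · exact (utility_flipVote_poaProfile_zero_zero hε.2 hT ha ha' hs).trans_eq
      (utility_poaProfile_zero hε.1).symm
  all_goals simp [poaProfile, poaBeliefs] at hdishonest; linarith

theorem qual_poaBeliefs_zero (hT : T ≤ 1) :
    qual (poaWeights ε) (poaBeliefs T) T 0 = 2 := by
  simp [qual, poaWeights, poaBeliefs, hT]
  ring

theorem qual_poaBeliefs_one (hT : T ∈ Set.Ioo (0 : ℝ) 1) :
    qual (poaWeights ε) (poaBeliefs T) T 1 = 1 + ε := by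
  simp [qual, poaWeights, poaBeliefs, hT.2.le, hT.1]

end Instance

/-- Theorem 3.7 (Price of Anarchy at least 2): with `a, a', s > 0`, `T = (a'+s)/(a'+s+a)`,
and `ε ∈ (0,1)`, in the instance with two experts of weights `1+ε` and `1−ε`, beliefs
`(T, 1)` and `(1, 0)`, and zero external rewards, the profile where expert 1 approves only
proposal 2 and expert 2 approves only proposal 1 is an exact semi-strategic pure Nash
equilibrium of `M_AV`; its winner is proposal 2, with `Qual[2] = 1+ε` while `Qual[1] = 2`. -/
theorem stmt11 (a a' s : ℝ) (ha : 0 < a) (ha' : 0 < a') (hs : 0 < s)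
    (T : ℝ) (hT : T = (a' + s) / (a' + s + a))
    (ε : ℝ) (hε : ε ∈ Set.Ioo (0:ℝ) 1) :
    let w : Fin 2 → ℝ := ![1 + ε, 1 - ε]
    let p : Fin 2 → Fin 2 → ℝ := ![![T, 1], ![1, 0]]
    let g : Fin 2 → Fin 2 → ℝ := fun _ _ => 0
    let r : Fin 2 → Fin 2 → Bool := ![![false, true], ![true, false]]
    (∀ i (r' : Fin 2 → Bool),
      utility w p g a a' s (Function.update r i r') i ≤ utility w p g a a' s r i) ∧
    semiStrategicConsistent w p g a a' s T r ∧
    winner w r = some 1 ∧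
    qual w p T 1 = 1 + ε ∧
    qual w p T 0 = 2 := by
  intro w p g r
  have hT_mem := threshold_mem_Ioo hT ha ha' hs
  refine ⟨fun i r' => ?_, semiStrategicConsistent_poaProfile hε hT ha ha' hs,
    winner_poaProfile hε.1, qual_poaBeliefs_one hT_mem, qual_poaBeliefs_zero hT_mem.2.le⟩
  fin_cases i
  · exact (utility_poaBeliefs_zero_le hT ha ha' hs _).trans_eq (utility_poaProfile_zero hε.1).symm
  · exact (utility_update_poaProfile_one_le hε.1 ha' hs r').trans_eq
      (utility_poaProfile_one hε.1).symm
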